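/- For any f ∈ ℍ[z] and any γ ∈ [α] (a non-real conjugacy class), the left evaluation of f at γ can be recovered from the left evaluations at α and \bar{α} via f^{eℓ}(γ) = (γ−\bar{γ})⁻¹[(γ−\bar{α}) f^{eℓ}(α) + (γ−α) f^{eℓ}(\bar{α})]. -/

import Mathlib

open Polynomial

/-- Left evaluation of a quaternion polynomial: `f^{eℓ}(α) = Σ α^j f_j`. -/
noncomputable def levalQ (α : Quaternion ℝ) (f : Polynomial (Quaternion ℝ)) : Quaternion ℝ :=
  f.sum fun j a => α ^ j * a

/-! The powers of a quaternion `x` satisfy `x ^ (n + 2) = 2 re x • x ^ (n + 1) - |x|² • x ^ n`,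
a recurrence whose coefficients are constant on conjugacy classes. So
`(γ - γ̄) γ ^ n = (γ - ᾱ) α ^ n + (γ - α) ᾱ ^ n` holds for all `n` as soon as it holds for
`n = 0, 1`, which is a direct computation; multiplying on the right by the coefficients of `f`
and summing gives the formula. Finally `γ - γ̄ = 2 im γ` is invertible, since a conjugate of a
non-real quaternion is non-real. -/

namespace Quaternion

section CommRing

variable {R : Type*} [CommRing R]

theorem re_mul_comm (a b : ℍ[R]) : (a * b).re = (b * a).re := by
  simp only [re_mul]; ring

theorem sq_eq_two_re_smul_sub (x : ℍ[R]) : x ^ 2 = (2 * x.re) • x - (↑(normSq x) : ℍ[R]) := by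
  rw [← self_mul_star, star_eq_two_re_sub, mul_sub, ← coe_commutes, coe_mul_eq_smul, sq]
  abel

theorem pow_add_two (x : ℍ[R]) (n : ℕ) :
    x ^ (n + 2) = (2 * x.re) • x ^ (n + 1) - normSq x • x ^ n := by
  rw [pow_add, sq_eq_two_re_smul_sub, mul_sub, mul_smul_comm, ← pow_succ, ← coe_commutes,
    coe_mul_eq_smul]

theorem sub_star_mul_pow {α γ : ℍ[R]} (hre : γ.re = α.re) (hns : normSq γ = normSq α) (n : ℕ) :
    (γ - star γ) * γ ^ n = (γ - star α) * α ^ n + (γ - α) * star α ^ n := by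
  induction n using Nat.twoStepInduction with
  | zero =>
    simp only [pow_zero, mul_one, star_eq_two_re_sub, hre]
    abel
  | one =>
    calc (γ - star γ) * γ ^ 1 = γ ^ 2 - ↑(normSq γ) := by rw [pow_one, sub_mul, star_mul_self, sq]
      _ = γ * ↑(2 * α.re) - (↑(normSq α) + ↑(normSq α)) := by
        rw [sq_eq_two_re_smul_sub, hre, hns, mul_coe_eq_smul]; abel
      _ = γ * (α + star α) - (star α * α + α * star α) := by
        rw [self_add_star', star_mul_self, self_mul_star]
      _ = (γ - star α) * α ^ 1 + (γ - α) * star α ^ 1 := by noncomm_ring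
  | more n ih₀ ih₁ =>
    rw [pow_add_two γ, pow_add_two α, pow_add_two (star α), re_star, normSq_star, hre, hns]
    simp only [mul_sub, mul_smul_comm, ih₀, ih₁, smul_add]
    abel

end CommRing

section LinearOrderedField

variable {R : Type*} [Field R] [LinearOrder R] [IsStrictOrderedRing R] {h : ℍ[R]}

theorem re_conj (hh : h ≠ 0) (a : ℍ[R]) : (h⁻¹ * a * h).re = a.re := by
  rw [mul_assoc, re_mul_comm, mul_assoc, mul_inv_cancel₀ hh, mul_one]

theorem normSq_conj (hh : h ≠ 0) (a : ℍ[R]) : normSq (h⁻¹ * a * h) = normSq a := by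
  rw [map_mul, map_mul, mul_right_comm, ← map_mul, inv_mul_cancel₀ hh, map_one, one_mul]

theorem im_conj_ne_zero (hh : h ≠ 0) {a : ℍ[R]} (ha : a.im ≠ 0) : (h⁻¹ * a * h).im ≠ 0 := by
  intro him
  have hreal : h⁻¹ * a * h = ((h⁻¹ * a * h).re : ℍ[R]) := by
    rw [← re_add_im (h⁻¹ * a * h), him, add_zero, re_coe]
  generalize (h⁻¹ * a * h).re = c at hreal
  have : a = h * c * h⁻¹ := by rw [← hreal]; simp [mul_assoc, hh]
  rw [this, ← coe_commutes, mul_assoc, mul_inv_cancel₀ hh, mul_one, im_coe] at ha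
  exact ha rfl

theorem self_sub_star_ne_zero {a : ℍ[R]} (ha : a.im ≠ 0) : a - star a ≠ 0 := by
  intro h0
  apply ha
  have : a.im + a.im = 0 := by simpa using congrArg im h0
  exact (smul_eq_zero.1 ((two_smul R _).trans this)).resolve_left two_ne_zero

end LinearOrderedField

end Quaternion

open Quaternion

theorem sub_star_mul_levalQ {α γ : ℍ[ℝ]} (hre : γ.re = α.re) (hns : normSq γ = normSq α)
    (f : ℍ[ℝ][X]) :
    (γ - star γ) * levalQ γ f = (γ - star α) * levalQ α f + (γ - α) * levalQ (star α) f := by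
  simp only [levalQ, Polynomial.sum, Finset.mul_sum, ← Finset.sum_add_distrib, ← mul_assoc,
    sub_star_mul_pow hre hns, add_mul]

/-- Interpolation formula for left evaluation on a conjugacy class. -/
theorem stmt8 (α : Quaternion ℝ) (hα : α.im ≠ 0) (f : Polynomial (Quaternion ℝ))
    (γ : Quaternion ℝ) (hγ : ∃ h : Quaternion ℝ, h ≠ 0 ∧ γ = h⁻¹ * α * h) :
    levalQ γ f = (γ - star γ)⁻¹ *
      ((γ - star α) * levalQ α f + (γ - α) * levalQ (star α) f) := by
  obtain ⟨h, hh, rfl⟩ := hγ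
  rw [← sub_star_mul_levalQ (re_conj hh α) (normSq_conj hh α),
    inv_mul_cancel_left₀ (self_sub_star_ne_zero (im_conj_ne_zero hh hα))]
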